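/- arXiv:0704.0273 — 2 statements merged into one kernel-verified Lean document; each statement's English description precedes it below -/
import Mathlib

section
/- Let Γ ⊂ Σ be a graph embedded as the 1-skeleton of a CW decomposition of a closed oriented surface Σ. If Γ admits a Kasteleyn orientation (an orientation K of the edges such that for every face f, the number n^K(∂f) of edges traversed against their orientation when going around ∂f counter-clockwise is odd), then the number of vertices of Γ is even. -/
/-!
Every edge is traversed exactly once against `K` by the face boundaries: once in each
direction in total, and exactly one of the two directions disagrees with `K`. Summing
`n^K(∂f)` over the faces therefore gives `E`, while each summand is odd, so `E ≡ F (mod 2)`.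
Euler's formula `V − E + F = 2 − 2g` then makes `V` even.
-/

/-- Starting vertex of a step of a walk: the step `(e, b)` traverses the edge `e`
along its reference direction (`src e → dst e`) if `b = true`, against it otherwise. -/
def stepStart {V E : Type*} (src dst : E → V) (p : E × Bool) : V :=
  if p.2 then src p.1 else dst p.1

/-- Ending vertex of a step of a walk. -/
def stepEnd {V E : Type*} (src dst : E → V) (p : E × Bool) : V :=
  if p.2 then dst p.1 else src p.1

/-- A nonempty cyclically closed walk: each step ends where the (cyclically) next
one starts. -/
def IsClosedWalk {V E : Type*} (src dst : E → V) (l : List (E × Bool)) : Prop :=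
  l ≠ [] ∧ ∀ i : Fin l.length,
    stepEnd src dst (l.get i) =
      stepStart src dst (l.get ⟨(i.1 + 1) % l.length, Nat.mod_lt _ (Nat.lt_of_le_of_lt (Nat.zero_le _) i.2)⟩)

theorem List.countP_snd_eq_sum_count {α β : Type*} [Fintype α] [DecidableEq α] [DecidableEq β]
    (k : α → β) (l : List (α × β)) :
    l.countP (fun p => decide (p.2 = k p.1)) = ∑ a, l.count (a, k a) := by
  induction l with
  | nil => simp
  | cons x l ih =>
    rw [List.countP_cons, ih]
    simp only [List.count_cons, Finset.sum_add_distrib]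
    congr 1
    rw [Finset.sum_eq_single x.1 (fun a _ ha => by simp [Prod.ext_iff, Ne.symm ha]) (by simp)]
    simp [Prod.ext_iff]

theorem sum_countP_against_eq_card {E F : Type*} [Fintype E] [Fintype F] [DecidableEq E]
    (bd : F → List (E × Bool))
    (hpair : ∀ e : E, (∑ f : F, (bd f).count (e, true)) = 1 ∧
      (∑ f : F, (bd f).count (e, false)) = 1)
    (K : E → Bool) :
    ∑ f : F, (bd f).countP (fun p => p.2 != K p.1) = Fintype.card E := by
  have hone (e : E) : ∑ f : F, (bd f).count (e, !K e) = 1 := by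
    cases K e
    exacts [(hpair e).1, (hpair e).2]
  calc ∑ f : F, (bd f).countP (fun p => p.2 != K p.1)
      = ∑ f : F, (bd f).countP (fun p => decide (p.2 = !K p.1)) :=
        Finset.sum_congr rfl fun f _ => List.countP_congr fun p _ => by
          cases p.2 <;> cases K p.1 <;> decide
    _ = ∑ e : E, ∑ f : F, (bd f).count (e, !K e) := by
        rw [Finset.sum_comm]
        exact Finset.sum_congr rfl fun f _ => List.countP_snd_eq_sum_count (fun e => !K e) (bd f)
    _ = Fintype.card E := by
        simp [hone]

theorem even_iff_even_card_of_sum_odd {ι : Type*} [Fintype ι] {n : ι → ℕ} {m : ℕ}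
    (hn : ∀ i, Odd (n i)) (h : ∑ i, n i = m) :
    Even m ↔ Even (Fintype.card ι) := by
  rw [← h, Finset.even_sum_iff_even_card_odd, Finset.filter_true_of_mem fun i _ => hn i,
    Finset.card_univ]

theorem even_card_vertices_of_kasteleyn_general
    {V E F : Type*} [Fintype V] [Fintype E] [Fintype F] [DecidableEq E]
    (bd : F → List (E × Bool))
    (hpair : ∀ e : E, (∑ f : F, (bd f).count (e, true)) = 1 ∧
      (∑ f : F, (bd f).count (e, false)) = 1)
    (g : ℕ)
    (heuler : (Fintype.card V : ℤ) - Fintype.card E + Fintype.card F = 2 - 2 * g)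
    (K : E → Bool)
    (hK : ∀ f : F, Odd ((bd f).countP (fun p => p.2 != K p.1))) :
    Even (Fintype.card V) := by
  have hEF : Even (Fintype.card E) ↔ Even (Fintype.card F) :=
    even_iff_even_card_of_sum_odd hK (sum_countP_against_eq_card bd hpair K)
  have hV : (Fintype.card V : ℤ) = 2 - 2 * g + Fintype.card E - Fintype.card F := by
    linarith
  rw [← Int.even_coe_nat, hV]
  simp only [Int.even_sub, Int.even_add, Int.even_coe_nat, hEF, even_two_mul, even_two, true_iff]

/-- If a graph `Γ`, the 1-skeleton of a CW decomposition of a closed oriented surface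
of genus `g` (each edge appearing exactly twice, once in each direction, among the
counter-clockwise face boundary walks `bd f`; Euler characteristic `V − E + F = 2 − 2g`)
admits a Kasteleyn orientation `K` (for every face `f`, the number `n^K(∂f)` of edges
of `∂f` traversed against `K` is odd), then the number of vertices is even. -/
theorem even_card_vertices_of_kasteleyn
    {V E F : Type*} [Fintype V] [Fintype E] [Fintype F] [DecidableEq E]
    (src dst : E → V) (bd : F → List (E × Bool))
    (hclosed : ∀ f : F, IsClosedWalk src dst (bd f))
    (hpair : ∀ e : E, (∑ f : F, (bd f).count (e, true)) = 1 ∧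
      (∑ f : F, (bd f).count (e, false)) = 1)
    (g : ℕ)
    (heuler : (Fintype.card V : ℤ) - Fintype.card E + Fintype.card F = 2 - 2 * g)
    (K : E → Bool)
    (hK : ∀ f : F, Odd ((bd f).countP (fun p => p.2 != K p.1))) :
    Even (Fintype.card V) :=
  even_card_vertices_of_kasteleyn_general bd hpair g heuler K hK
end

section
/- Let Γ ⊂ Σ be a connected surface graph with boundary, with V vertices, on a compact oriented surface Σ whose boundary components are C₁,…,C_μ (oriented as induced boundary). Given n₁,…,n_μ ∈ {0,1}, there exists a Kasteleyn orientation K on Γ ⊂ Σ with 1 + n^K(−C_i) ≡ n_i (mod 2) for all i if and only if n₁ + ⋯ + n_μ ≡ V (mod 2). -/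
/-- The reversed walk `−C`. -/
def revWalk {E : Type*} (l : List (E × Bool)) : List (E × Bool) :=
  (l.map (fun p => (p.1, !p.2))).reverse

/-- `n^K(C)`: the number of steps of the walk `C` traversing an edge against the
orientation `K` (where `K e = true` means `K` orients `e` from `src e` to `dst e`). -/
def againstCount {E : Type*} (K : E → Bool) (l : List (E × Bool)) : ℕ :=
  l.countP (fun p => p.2 != K p.1)

section

open Finset Function

variable {E X : Type*}

theorem exists_mem_revWalk_iff {l : List (E × Bool)} {e : E} :
    (∃ b, (e, b) ∈ revWalk l) ↔ ∃ b, (e, b) ∈ l := by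
  simp [revWalk, or_comm]

def sharedEdgeGraph (w : X → List (E × Bool)) : SimpleGraph X :=
  SimpleGraph.fromRel fun x y => ∃ e : E, ∃ b b' : Bool, (e, b) ∈ w x ∧ (e, b') ∈ w y

theorem sharedEdgeGraph_congr {w w' : X → List (E × Bool)}
    (h : ∀ x e, (∃ b, (e, b) ∈ w x) ↔ ∃ b, (e, b) ∈ w' x) :
    sharedEdgeGraph w = sharedEdgeGraph w' := by
  ext x y
  simp only [sharedEdgeGraph, SimpleGraph.fromRel_adj, exists_and_left, exists_and_right, h]

variable [DecidableEq E]

theorem againstCount_eq_sum [Fintype E] (K : E → Bool) (l : List (E × Bool)) :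
    againstCount K l = ∑ e, l.count (e, !K e) := by
  induction l with
  | nil => simp [againstCount]
  | cons p l ih =>
    obtain ⟨a, b⟩ := p
    simp only [againstCount] at ih
    simp only [againstCount, List.countP_cons, List.count_cons, ih, sum_add_distrib, beq_iff_eq,
      Prod.ext_iff, ite_and, sum_ite_eq, mem_univ, if_true]
    cases b <;> cases K a <;> rfl

theorem againstCount_update [Fintype E] (K : E → Bool) (e : E) (l : List (E × Bool)) :
    (againstCount (update K e (!K e)) l : ZMod 2) =
      againstCount K l + l.count (e, true) + l.count (e, false) := by
  have hrest : ∑ e' ∈ {e}ᶜ, l.count (e', !update K e (!K e) e') =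
      ∑ e' ∈ {e}ᶜ, l.count (e', !K e') :=
    sum_congr rfl fun e' he' => by rw [update_of_ne (by simpa using he')]
  simp only [againstCount_eq_sum, Fintype.sum_eq_add_sum_compl e (f := fun x => _), hrest,
    update_self, Bool.not_not]
  push_cast
  have h2 : (2 : ZMod 2) = 0 := rfl
  cases K e <;> simp only [Bool.not_false, Bool.not_true]
  · linear_combination -(l.count (e, true) : ZMod 2) * h2
  · linear_combination -(l.count (e, false) : ZMod 2) * h2

def IsStepPartition [Fintype X] (w : X → List (E × Bool)) : Prop :=
  ∀ e b, ∑ x, (w x).count (e, b) = 1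

theorem sum_againstCount [Fintype E] [Fintype X] {w : X → List (E × Bool)}
    (hcount : IsStepPartition w) (K : E → Bool) :
    ∑ x, againstCount K (w x) = Fintype.card E := by
  simp_rw [againstCount_eq_sum]
  rw [sum_comm]
  simp [hcount _ _]

variable [Fintype X] {w : X → List (E × Bool)}

def againstParity (w : X → List (E × Bool)) (K : E → Bool) (x : X) : ZMod 2 :=
  againstCount K (w x)

theorem sum_againstParity [Fintype E] (hcount : IsStepPartition w)
    (K : E → Bool) : ∑ x, againstParity w K x = Fintype.card E := by
  unfold againstParity
  rw [← Nat.cast_sum, sum_againstCount hcount]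

variable [DecidableEq X]

theorem count_eq_ite_of_mem (hcount : IsStepPartition w) {e : E} {b : Bool}
    {x : X} (hx : (e, b) ∈ w x) (z : X) : (w z).count (e, b) = if z = x then 1 else 0 := by
  have hpos : 0 < (w x).count (e, b) := List.count_pos_iff.mpr hx
  split_ifs with hzx
  · subst hzx
    have := single_le_sum (f := fun x => (w x).count (e, b)) (fun _ _ => Nat.zero_le _)
      (mem_univ z)
    simp only [hcount e b] at this
    omega
  · have := sum_le_sum_of_subset (f := fun x => (w x).count (e, b)) (subset_univ {x, z})
    rw [sum_pair (Ne.symm hzx), hcount e b] at this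
    omega

theorem againstParity_update [Fintype E] (hcount : IsStepPartition w)
    (K : E → Bool) {e : E} {b : Bool} {x y : X} (hx : (e, b) ∈ w x) (hy : (e, !b) ∈ w y) :
    againstParity w (update K e (!K e)) = againstParity w K + Pi.single x 1 + Pi.single y 1 := by
  ext z
  have hcx := count_eq_ite_of_mem hcount hx z
  have hcy := count_eq_ite_of_mem hcount hy z
  simp only [againstParity, againstCount_update, Pi.add_apply, Pi.single_apply]
  cases b <;> simp only [Bool.not_false, Bool.not_true] at hcy <;> rw [hcx, hcy] <;> push_cast
  · ring
  · rfl

def againstParityShifts (w : X → List (E × Bool)) : AddSubmonoid (X → ZMod 2) where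
  carrier := {d | ∀ K, ∃ K', againstParity w K' = againstParity w K + d}
  zero_mem' K := ⟨K, (add_zero _).symm⟩
  add_mem' {d d'} hd hd' K := by
    obtain ⟨K₁, hK₁⟩ := hd K
    obtain ⟨K₂, hK₂⟩ := hd' K₁
    exact ⟨K₂, by rw [hK₂, hK₁, add_assoc]⟩

theorem single_add_single_mem_againstParityShifts_of_adj [Fintype E]
    (hcount : IsStepPartition w) {x y : X} (hxy : (sharedEdgeGraph w).Adj x y) :
    Pi.single x 1 + Pi.single y 1 ∈ againstParityShifts w := by
  have hshared : ∀ x y : X, x ≠ y → ∀ e b b', (e, b) ∈ w x → (e, b') ∈ w y →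
      Pi.single x 1 + Pi.single y 1 ∈ againstParityShifts w := by
    intro x y hne e b b' hx hy K
    have hb : b' = !b := by
      have hy0 := count_eq_ite_of_mem hcount hx y
      rw [if_neg hne.symm, List.count_eq_zero] at hy0
      cases b <;> cases b' <;> simp_all
    subst hb
    exact ⟨update K e (!K e), by rw [againstParity_update hcount K hx hy, add_assoc]⟩
  obtain ⟨hne, ⟨e, b, b', hx, hy⟩ | ⟨e, b, b', hy, hx⟩⟩ := hxy
  · exact hshared x y hne e b b' hx hy
  · rw [add_comm]
    exact hshared y x hne.symm e b b' hy hx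

theorem single_add_single_mem_againstParityShifts_of_reachable [Fintype E]
    (hcount : IsStepPartition w) {x y : X}
    (hxy : (sharedEdgeGraph w).Reachable x y) :
    Pi.single x 1 + Pi.single y 1 ∈ againstParityShifts w := by
  have hcancel : ∀ z, (Pi.single z 1 + Pi.single z 1 : X → ZMod 2) = 0 := fun z => by
    rw [← Pi.single_add, show (1 + 1 : ZMod 2) = 0 from rfl, Pi.single_zero]
  obtain ⟨p⟩ := hxy
  induction p with
  | nil => exact hcancel _ ▸ zero_mem _
  | @cons u v y hadj _ ih =>
    have := add_mem (single_add_single_mem_againstParityShifts_of_adj hcount hadj) ih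
    rwa [add_assoc, ← add_assoc (Pi.single v 1), hcancel, zero_add] at this

theorem mem_againstParityShifts_of_sum_eq_zero [Fintype E]
    (hcount : IsStepPartition w) (hconn : (sharedEdgeGraph w).Connected)
    {d : X → ZMod 2} (hd : ∑ x, d x = 0) : d ∈ againstParityShifts w := by
  obtain ⟨r⟩ := hconn.nonempty
  have hterm : ∀ z (c : ZMod 2), Pi.single z c + Pi.single r c ∈ againstParityShifts w := by
    intro z c
    obtain rfl | rfl : c = 0 ∨ c = 1 := by revert c; decide
    · rw [Pi.single_zero, Pi.single_zero, add_zero]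
      exact (againstParityShifts w).zero_mem
    · exact single_add_single_mem_againstParityShifts_of_reachable hcount
        (hconn.preconnected z r)
  have hdecomp : d = ∑ z, (Pi.single z (d z) + Pi.single r (d z)) := by
    ext a
    simp [Finset.sum_apply, Pi.single_apply, sum_add_distrib, hd]
  rw [hdecomp]
  exact sum_mem fun z _ => hterm z (d z)

theorem exists_againstParity_eq_iff [Fintype E]
    (hcount : IsStepPartition w) (hconn : (sharedEdgeGraph w).Connected)
    (t : X → ZMod 2) :
    (∃ K, againstParity w K = t) ↔ ∑ x, t x = Fintype.card E := by
  refine ⟨fun ⟨K, hK⟩ => hK ▸ sum_againstParity hcount K, fun ht => ?_⟩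
  let K₀ : E → Bool := fun _ => true
  have hsum : ∑ x, (t - againstParity w K₀) x = 0 := by
    simp only [Pi.sub_apply, sum_sub_distrib, ht, sum_againstParity hcount, sub_self]
  obtain ⟨K, hK⟩ := mem_againstParityShifts_of_sum_eq_zero hcount hconn hsum K₀
  exact ⟨K, by rw [hK, add_sub_cancel]⟩

theorem one_add_mod_two_eq_iff {a n : ℕ} (hn : n ≤ 1) :
    (1 + a) % 2 = n ↔ (a : ZMod 2) = n + 1 := by
  have h2 : (2 : ZMod 2) = 0 := rfl
  rw [← Nat.mod_eq_of_lt (Nat.lt_succ_of_le hn), ← ZMod.natCast_eq_natCast_iff', Nat.cast_add,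
    Nat.cast_one, ZMod.natCast_mod]
  constructor <;> intro h
  · linear_combination h - h2
  · linear_combination h + h2

end

theorem kasteleyn_boundary_existence_general
    {V E F : Type*} [Fintype V] [Fintype E] [Fintype F] [DecidableEq E]
    (bd : F → List (E × Bool))
    (μ : ℕ) (C : Fin μ → List (E × Bool))
    (hpair : ∀ e : E,
      ((∑ f : F, (bd f).count (e, true)) + ∑ i : Fin μ, (revWalk (C i)).count (e, true)) = 1 ∧
      ((∑ f : F, (bd f).count (e, false)) + ∑ i : Fin μ, (revWalk (C i)).count (e, false)) = 1)
    (hconn : (SimpleGraph.fromRel (fun x y : F ⊕ Fin μ =>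
      ∃ e : E, ∃ b b' : Bool,
        (e, b) ∈ (Sum.elim bd C x) ∧ (e, b') ∈ (Sum.elim bd C y))).Connected)
    (g : ℕ)
    (heuler : (Fintype.card V : ℤ) - Fintype.card E + Fintype.card F = 2 - 2 * g - μ)
    (n : Fin μ → ℕ) (hn : ∀ i, n i ≤ 1) :
    (∃ K : E → Bool, (∀ f : F, Odd (againstCount K (bd f))) ∧
        ∀ i : Fin μ, (1 + againstCount K (revWalk (C i))) % 2 = n i) ↔
      (∑ i : Fin μ, n i) % 2 = Fintype.card V % 2 := by
  classical
  set w : F ⊕ Fin μ → List (E × Bool) := Sum.elim bd fun i => revWalk (C i)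
  let t : F ⊕ Fin μ → ZMod 2 := Sum.elim 1 fun i => n i + 1
  have hcount : IsStepPartition w := by
    intro e b
    cases b <;> simp [w, Fintype.sum_sum_type, hpair e]
  have hconn' : (sharedEdgeGraph w).Connected := by
    refine sharedEdgeGraph_congr (fun x e => ?_) ▸ hconn
    rcases x with f | i
    · rfl
    · exact exists_mem_revWalk_iff.symm
  have hK : ∀ K, ((∀ f, Odd (againstCount K (bd f))) ∧
      ∀ i, (1 + againstCount K (revWalk (C i))) % 2 = n i) ↔ againstParity w K = t := by
    intro K
    simp only [funext_iff, Sum.forall, againstParity, t, w, Sum.elim_inl, Sum.elim_inr,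
      Pi.one_apply, ZMod.natCast_eq_one_iff_odd, one_add_mod_two_eq_iff (hn _)]
  have ht : ∑ x, t x = ((∑ i, n i : ℕ) : ZMod 2) + (Fintype.card F + μ) := by
    simp only [t, Fintype.sum_sum_type, Sum.elim_inl, Sum.elim_inr, Pi.one_apply,
      Finset.sum_const, Finset.card_univ, nsmul_eq_mul, Finset.sum_add_distrib, Fintype.card_fin,
      Nat.cast_sum]
    ring
  have hE : (Fintype.card E : ZMod 2) = Fintype.card V + (Fintype.card F + μ) := by
    have h := congrArg (Int.cast : ℤ → ZMod 2) heuler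
    push_cast at h
    have h2 : (2 : ZMod 2) = 0 := rfl
    linear_combination -h + ((g : ZMod 2) - 1) * h2
  simp_rw [hK, exists_againstParity_eq_iff hcount hconn', ht, hE, add_left_inj,
    ZMod.natCast_eq_natCast_iff']

/-- Existence criterion for Kasteleyn orientations with prescribed boundary behaviour,
on a connected compact oriented surface of genus `g` with `μ` boundary components.
The surface is encoded by the counter-clockwise face boundary walks `bd f` and the
boundary component walks `C i` (oriented as the induced boundary), every edge of
`Γ̄ = Γ ∪ ∂Σ` occurring exactly twice, once in each direction, among the walks
`bd f` and `−C i`; connectedness is encoded by connectivity of the graph whose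
vertices are the faces and boundary components, adjacent when sharing an edge.
Given `n₁, …, n_μ ∈ {0,1}`, there is a Kasteleyn orientation `K`
(i.e. `n^K(∂f)` odd for every face `f`) with `1 + n^K(−C_i) ≡ n_i (mod 2)` for all
`i` if and only if `n₁ + ⋯ + n_μ ≡ V (mod 2)`. -/
theorem kasteleyn_boundary_existence
    {V E F : Type*} [Fintype V] [Fintype E] [Fintype F] [DecidableEq E]
    (src dst : E → V) (bd : F → List (E × Bool))
    (μ : ℕ) (C : Fin μ → List (E × Bool))
    (hfclosed : ∀ f : F, IsClosedWalk src dst (bd f))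
    (hcclosed : ∀ i : Fin μ, IsClosedWalk src dst (C i))
    (hpair : ∀ e : E,
      ((∑ f : F, (bd f).count (e, true)) + ∑ i : Fin μ, (revWalk (C i)).count (e, true)) = 1 ∧
      ((∑ f : F, (bd f).count (e, false)) + ∑ i : Fin μ, (revWalk (C i)).count (e, false)) = 1)
    (hconn : (SimpleGraph.fromRel (fun x y : F ⊕ Fin μ =>
      ∃ e : E, ∃ b b' : Bool,
        (e, b) ∈ (Sum.elim bd C x) ∧ (e, b') ∈ (Sum.elim bd C y))).Connected)
    (g : ℕ)
    (heuler : (Fintype.card V : ℤ) - Fintype.card E + Fintype.card F = 2 - 2 * g - μ)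
    (n : Fin μ → ℕ) (hn : ∀ i, n i ≤ 1) :
    (∃ K : E → Bool, (∀ f : F, Odd (againstCount K (bd f))) ∧
        ∀ i : Fin μ, (1 + againstCount K (revWalk (C i))) % 2 = n i) ↔
      (∑ i : Fin μ, n i) % 2 = Fintype.card V % 2 :=
  kasteleyn_boundary_existence_general bd μ C hpair hconn g heuler n hn
end
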